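/- arXiv:2103.02430 — 2 statements merged into one kernel-verified Lean document; each statement's English description precedes it below -/
import Mathlib

section
/- Let L : ℝ^n ⇒ ℝ^n be a linear process and let L^⊥ denote its dual linear process, defined by graph L^⊥ = {(b, −a) : (a,b) ∈ (graph L)^⊥}, where ⊥ denotes the orthogonal complement in ℝ^n × ℝ^n. Then F(L^⊥) = R(L)^⊥ and R(L^⊥) = F(L)^⊥. -/
open Matrix Set Pointwise

/-- A set-valued map from `ℝ^n` to subsets of `ℝ^n`. -/
abbrev SVMap (n : ℕ) := (Fin n → ℝ) → Set (Fin n → ℝ)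

/-- The graph of a set-valued map. -/
def graphOf {n : ℕ} (H : SVMap n) : Set ((Fin n → ℝ) × (Fin n → ℝ)) :=
  {p | p.2 ∈ H p.1}

/-- The set-valued map associated with a graph. -/
def ofGraph {n : ℕ} (G : Set ((Fin n → ℝ) × (Fin n → ℝ))) : SVMap n :=
  fun x => {y | (x, y) ∈ G}

/-- A convex cone: a nonempty convex set closed under nonnegative scalar multiplication. -/
def IsConvexCone {V : Type*} [AddCommGroup V] [Module ℝ V] (C : Set V) : Prop :=
  C.Nonempty ∧ Convex ℝ C ∧ ∀ c : ℝ, 0 ≤ c → ∀ x ∈ C, c • x ∈ C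

/-- A convex process: a set-valued map whose graph is a convex cone. -/
def IsConvexProcess {n : ℕ} (H : SVMap n) : Prop :=
  IsConvexCone (graphOf H)

/-- A linear process: a set-valued map whose graph is a linear subspace. -/
def IsLinearProcess {n : ℕ} (H : SVMap n) : Prop :=
  ∃ S : Submodule ℝ ((Fin n → ℝ) × (Fin n → ℝ)), graphOf H = (S : Set _)

/-- The domain of a set-valued map. -/
def domOf {n : ℕ} (H : SVMap n) : Set (Fin n → ℝ) := {x | (H x).Nonempty}

/-- The image of a set-valued map. -/
def imOf {n : ℕ} (H : SVMap n) : Set (Fin n → ℝ) := {y | ∃ x, y ∈ H x}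

/-- The reachable set: states reachable from the origin by a finite trajectory. -/
def reachSet {n : ℕ} (H : SVMap n) : Set (Fin n → ℝ) :=
  {ξ | ∃ (q : ℕ) (x : ℕ → (Fin n → ℝ)),
    x 0 = 0 ∧ x q = ξ ∧ ∀ k, k < q → x (k + 1) ∈ H (x k)}

/-- The null-controllable set: states steered to the origin by a finite trajectory. -/
def nullSet {n : ℕ} (H : SVMap n) : Set (Fin n → ℝ) :=
  {ξ | ∃ (q : ℕ) (x : ℕ → (Fin n → ℝ)),
    x 0 = ξ ∧ x q = 0 ∧ ∀ k, k < q → x (k + 1) ∈ H (x k)}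

/-- The feasible set: states from which an infinite trajectory emanates. -/
def feasSet {n : ℕ} (H : SVMap n) : Set (Fin n → ℝ) :=
  {ξ | ∃ x : ℕ → (Fin n → ℝ), x 0 = ξ ∧ ∀ k, x (k + 1) ∈ H (x k)}

/-- `H` is reachable if every feasible state is reachable. -/
def IsReachable {n : ℕ} (H : SVMap n) : Prop := feasSet H ⊆ reachSet H

/-- `H` is null-controllable if every feasible state is null-controllable. -/
def IsNullControllable {n : ℕ} (H : SVMap n) : Prop := feasSet H ⊆ nullSet H

/-- The minimal linear process `L_-` associated with `H`: graph `L_- = lin(graph H) = (-graph H) ∩ graph H`. -/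
def Lminus {n : ℕ} (H : SVMap n) : SVMap n := ofGraph ((-(graphOf H)) ∩ graphOf H)

/-- The maximal linear process `L_+` associated with `H`: graph `L_+ = Lin(graph H) = graph H - graph H`. -/
def Lplus {n : ℕ} (H : SVMap n) : SVMap n := ofGraph (graphOf H - graphOf H)

/-- The negative dual process: `p ∈ H^-(q)` iff `⟨p,x⟩ ≥ ⟨q,y⟩` for all `(x,y) ∈ graph H`. -/
def dualNeg {n : ℕ} (H : SVMap n) : SVMap n :=
  fun q => {p | ∀ x y, y ∈ H x → q ⬝ᵥ y ≤ p ⬝ᵥ x}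

/-- The positive dual process: `p ∈ H^+(q)` iff `⟨p,x⟩ ≤ ⟨q,y⟩` for all `(x,y) ∈ graph H`. -/
def dualPos {n : ℕ} (H : SVMap n) : SVMap n :=
  fun q => {p | ∀ x y, y ∈ H x → p ⬝ᵥ x ≤ q ⬝ᵥ y}

/-- `(lam, ξ)` is an eigenpair of `G` if `ξ ≠ 0` and `lam • ξ ∈ G(ξ)`. -/
def IsEigenpair {n : ℕ} (G : SVMap n) (lam : ℝ) (ξ : Fin n → ℝ) : Prop :=
  ξ ≠ 0 ∧ lam • ξ ∈ G ξ

/-- The conic hull: all conic (nonnegative) combinations of elements of `S`. -/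
def coneHull {V : Type*} [AddCommGroup V] [Module ℝ V] (S : Set V) : Set V :=
  {x | ∃ (k : ℕ) (c : Fin k → ℝ) (f : Fin k → V),
    (∀ i, 0 ≤ c i) ∧ (∀ i, f i ∈ S) ∧ x = ∑ i, c i • f i}

/-- The most powerful unfalsified process `H_D`: the convex process with graph `cone D`. -/
def mpup {n : ℕ} (D : Set ((Fin n → ℝ) × (Fin n → ℝ))) : SVMap n := ofGraph (coneHull D)

/-- The inner product on `ℝ^n × ℝ^n`. -/
def pairDot {n : ℕ} (p q : (Fin n → ℝ) × (Fin n → ℝ)) : ℝ := p.1 ⬝ᵥ q.1 + p.2 ⬝ᵥ q.2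

/-- The positive polar cone of a subset of `ℝ^n × ℝ^n`. -/
def polarPos {n : ℕ} (C : Set ((Fin n → ℝ) × (Fin n → ℝ))) :
    Set ((Fin n → ℝ) × (Fin n → ℝ)) :=
  {η | ∀ d ∈ C, 0 ≤ pairDot d η}

/-- The negative polar cone of a subset of `ℝ^n × ℝ^n`. -/
def polarNeg {n : ℕ} (C : Set ((Fin n → ℝ) × (Fin n → ℝ))) :
    Set ((Fin n → ℝ) × (Fin n → ℝ)) :=
  {η | ∀ d ∈ C, pairDot d η ≤ 0}

/-- The data set `D = {(x_t, y_t)}` whose elements are the column pairs of `X` and `Y`. -/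
def colPairs {n T : ℕ} (X Y : Matrix (Fin n) (Fin T) ℝ) :
    Set ((Fin n → ℝ) × (Fin n → ℝ)) :=
  {p | ∃ t : Fin T, p = (fun i => X i t, fun i => Y i t)}

/-- The rows of the matrix `[Z −W]`, viewed as pairs `(z_i, -w_i)` in `ℝ^n × ℝ^n`. -/
def rowPairsZW {m n : ℕ} (Z W : Matrix (Fin m) (Fin n) ℝ) :
    Set ((Fin n → ℝ) × (Fin n → ℝ)) :=
  {p | ∃ i : Fin m, p = (fun j => Z i j, fun j => -W i j)}

/-- `X ℝ_+^T`: the image of the nonnegative orthant under `X`. -/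
def posImage {n T : ℕ} (X : Matrix (Fin n) (Fin T) ℝ) : Set (Fin n → ℝ) :=
  {x | ∃ v : Fin T → ℝ, (∀ t, 0 ≤ v t) ∧ x = X *ᵥ v}

/-- The set-valued map `S ↦ W^{-1}(Z S)`. -/
def mapWiZ {m n : ℕ} (Z W : Matrix (Fin m) (Fin n) ℝ) :
    Set (Fin n → ℝ) → Set (Fin n → ℝ) :=
  fun S => {y | ∃ x ∈ S, W *ᵥ y = Z *ᵥ x}

/-- The set-valued map `S ↦ Z^{-1}(W S)`. -/
def mapZiW {m n : ℕ} (Z W : Matrix (Fin m) (Fin n) ℝ) :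
    Set (Fin n → ℝ) → Set (Fin n → ℝ) :=
  fun S => {y | ∃ x ∈ S, Z *ᵥ y = W *ᵥ x}

/-- The set-valued map `S ↦ Y(X^{-1} S)`. -/
def mapYXi {n T : ℕ} (X Y : Matrix (Fin n) (Fin T) ℝ) :
    Set (Fin n → ℝ) → Set (Fin n → ℝ) :=
  fun S => {y | ∃ v : Fin T → ℝ, X *ᵥ v ∈ S ∧ y = Y *ᵥ v}

/-- The set-valued map `S ↦ X(Y^{-1} S)`. -/
def mapXYi {n T : ℕ} (X Y : Matrix (Fin n) (Fin T) ℝ) :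
    Set (Fin n → ℝ) → Set (Fin n → ℝ) :=
  fun S => {y | ∃ v : Fin T → ℝ, Y *ᵥ v ∈ S ∧ y = X *ᵥ v}

/-- The image of a set under a set-valued map. -/
def imageSV {n : ℕ} (H : SVMap n) (S : Set (Fin n → ℝ)) : Set (Fin n → ℝ) :=
  {y | ∃ x ∈ S, y ∈ H x}

/-- The inverse of a set-valued map. -/
def invSV {n : ℕ} (H : SVMap n) : SVMap n := fun y => {x | y ∈ H x}

/-- The linear map `(a, b) ↦ (b, -a)` on `ℝ^n × ℝ^n`. -/
def flipMap {n : ℕ} : ((Fin n → ℝ) × (Fin n → ℝ)) → ((Fin n → ℝ) × (Fin n → ℝ)) :=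
  fun p => (p.2, -p.1)

/-- The orthogonal complement of a subset of `ℝ^n × ℝ^n`. -/
def orthPair {n : ℕ} (C : Set ((Fin n → ℝ) × (Fin n → ℝ))) :
    Set ((Fin n → ℝ) × (Fin n → ℝ)) :=
  {q | ∀ p ∈ C, pairDot p q = 0}

/-- The dual linear process `L^⊥`, with graph `{(b, -a) : (a, b) ∈ (graph L)^⊥}`. -/
def perpProcess {n : ℕ} (L : SVMap n) : SVMap n :=
  ofGraph (flipMap '' orthPair (graphOf L))

/-- The orthogonal complement of a subset of `ℝ^n`. -/
def orthVec {n : ℕ} (S : Set (Fin n → ℝ)) : Set (Fin n → ℝ) :=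
  {x | ∀ y ∈ S, x ⬝ᵥ y = 0}


/-!
Write `R_q = L^q(0)` for the states reachable in `q` steps and `D_q = (L⁻¹)^q(ℝ^n)` for the
initial states of `q`-step trajectories. Then `R(L) = ⋃ R_q`, and the decreasing chain of
subspaces `D_q` stabilises, which makes its limit invariant under `L⁻¹`, hence equal to `F(L)`.
For a subspace `U`, `(L^⊥)⁻¹(U^⊥) = L(U)^⊥` and `L^⊥(U^⊥) = (L⁻¹ U)^⊥`: the nontrivial inclusions
come from `(A ∩ B)^⊥ = A^⊥ + B^⊥` applied to `graph L ∩ (U × ℝ^n)`. By induction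
`D_q(L^⊥) = R_q(L)^⊥` and `R_q(L^⊥) = D_q(L)^⊥`, and passing to the limit gives both identities.
-/

open LinearMap (BilinForm)

namespace LinearMap.BilinForm

section CommSemiring

variable {R M : Type*} [CommSemiring R] [AddCommMonoid M] [Module R M]

theorem orthogonal_sup (B : BilinForm R M) (W W' : Submodule R M) :
    B.orthogonal (W ⊔ W') = B.orthogonal W ⊓ B.orthogonal W' := by
  ext x
  simp only [mem_orthogonal_iff, Submodule.mem_inf, Submodule.mem_sup]
  constructor
  · intro h
    exact ⟨fun w hw => h w ⟨w, hw, 0, W'.zero_mem, add_zero w⟩,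
      fun w hw => h w ⟨0, W.zero_mem, w, hw, zero_add w⟩⟩
  · rintro ⟨h, h'⟩ _ ⟨w, hw, w', hw', rfl⟩
    rw [LinearMap.map_add₂, h w hw, h' w' hw', add_zero]

def prodSelf (B : BilinForm R M) : BilinForm R (M × M) :=
  B.compl₁₂ (LinearMap.fst R M M) (LinearMap.fst R M M) +
    B.compl₁₂ (LinearMap.snd R M M) (LinearMap.snd R M M)

@[simp]
theorem prodSelf_apply (B : BilinForm R M) (p q : M × M) :
    B.prodSelf p q = B p.1 q.1 + B p.2 q.2 := rfl

theorem IsSymm.prodSelf {B : BilinForm R M} (hB : B.IsSymm) : B.prodSelf.IsSymm :=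
  ⟨fun p q => by rw [prodSelf_apply, prodSelf_apply, hB.eq p.1, hB.eq p.2]⟩

theorem Nondegenerate.prodSelf {B : BilinForm R M} (hB : B.Nondegenerate) :
    B.prodSelf.Nondegenerate := by
  refine ⟨fun p hp => Prod.ext ?_ ?_, fun q hq => Prod.ext ?_ ?_⟩
  · exact hB.1 p.1 fun y => by simpa using hp (y, 0)
  · exact hB.1 p.2 fun y => by simpa using hp (0, y)
  · exact hB.2 q.1 fun x => by simpa using hq (x, 0)
  · exact hB.2 q.2 fun x => by simpa using hq (0, x)

end CommSemiring

theorem orthogonal_inf {K V : Type*} [Field K] [AddCommGroup V] [Module K V]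
    [FiniteDimensional K V] {B : BilinForm K V} (hB : B.Nondegenerate) (hB₀ : B.IsRefl)
    (W W' : Submodule K V) : B.orthogonal (W ⊓ W') = B.orthogonal W ⊔ B.orthogonal W' := by
  conv_lhs =>
    rw [← orthogonal_orthogonal hB hB₀ W, ← orthogonal_orthogonal hB hB₀ W', ← orthogonal_sup]
  exact orthogonal_orthogonal hB hB₀ _

end LinearMap.BilinForm

namespace Submodule

section Relation

variable {R M N : Type*} [CommSemiring R] [AddCommMonoid M] [AddCommMonoid N] [Module R M]
  [Module R N]

def relImage (S : Submodule R (M × N)) (U : Submodule R M) : Submodule R N :=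
  (S ⊓ U.prod ⊤).map (LinearMap.snd R M N)

@[simp]
theorem mem_relImage {S : Submodule R (M × N)} {U : Submodule R M} {y : N} :
    y ∈ S.relImage U ↔ ∃ x ∈ U, (x, y) ∈ S := by
  simp [relImage, mem_prod, and_comm]

theorem relImage_mono (S : Submodule R (M × N)) : Monotone S.relImage :=
  fun _ _ hUW _ hy => by
    obtain ⟨x, hx, hxy⟩ := mem_relImage.mp hy
    exact mem_relImage.mpr ⟨x, hUW hx, hxy⟩

def relInv (S : Submodule R (M × N)) : Submodule R (N × M) :=
  S.comap (LinearEquiv.prodComm R N M).toLinearMap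

@[simp]
theorem mem_relInv {S : Submodule R (M × N)} {y : N} {x : M} : (y, x) ∈ S.relInv ↔ (x, y) ∈ S :=
  Iff.rfl

theorem exists_iterate_relImage_top_stable [WellFoundedLT (Submodule R M)]
    (S : Submodule R (M × M)) : ∃ N, S.relImage^[N + 1] ⊤ = S.relImage^[N] ⊤ := by
  obtain ⟨N, hN⟩ := WellFoundedLT.antitone_chain_condition
    ((relImage_mono S).antitone_iterate_of_map_le (le_top : S.relImage ⊤ ≤ ⊤))
  exact ⟨N, (hN (N + 1) N.le_succ).symm⟩

end Relation

section Dual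

variable {K V : Type*} [Field K] [AddCommGroup V] [Module K V]

/-- The dual relation `{(b, -a) : (a, b) ⊥ S}` with respect to `B ⊕ B`. -/
def relDual (S : Submodule K (V × V)) (B : BilinForm K V) : Submodule K (V × V) :=
  (B.prodSelf.orthogonal S).comap ((-LinearMap.snd K V V).prod (LinearMap.fst K V V))

theorem mem_relDual {S : Submodule K (V × V)} {B : BilinForm K V} {x y : V} :
    (x, y) ∈ S.relDual B ↔ (-y, x) ∈ B.prodSelf.orthogonal S :=
  Iff.rfl

theorem relInv_relDual_relInv (S : Submodule K (V × V)) (B : BilinForm K V) :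
    (S.relInv.relDual B).relInv = S.relDual B := by
  ext ⟨x, y⟩
  simp only [mem_relInv, mem_relDual, LinearMap.BilinForm.mem_orthogonal_iff, Prod.forall,
    LinearMap.BilinForm.prodSelf_apply, map_neg]
  constructor <;> intro h a b hab <;> linear_combination -h b a hab

variable [FiniteDimensional K V] {B : BilinForm K V}

theorem relImage_relInv_relDual (hB : B.Nondegenerate) (hBs : B.IsSymm)
    (S : Submodule K (V × V)) (U : Submodule K V) :
    (S.relDual B).relInv.relImage (B.orthogonal U) = B.orthogonal (S.relImage U) := by
  ext q
  simp only [mem_relImage, mem_relInv, mem_relDual, LinearMap.BilinForm.mem_orthogonal_iff]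
  constructor
  · rintro ⟨p, hpU, hqp⟩ y ⟨x, hxU, hxy⟩
    simpa [hpU x hxU] using hqp (x, y) hxy
  · intro hq
    have hmem : ((0 : V), q) ∈ B.prodSelf.orthogonal (S ⊓ U.prod ⊤) := by
      rintro ⟨x, y⟩ ⟨hxy, hxU, -⟩
      simpa using hq y ⟨x, hxU, hxy⟩
    rw [LinearMap.BilinForm.orthogonal_inf hB.prodSelf hBs.prodSelf.isRefl, mem_sup] at hmem
    obtain ⟨s, hs, t, ht, hst⟩ := hmem
    have ht₂ : t.2 = 0 := hB.2 t.2 fun v => by simpa using ht (0, v) ⟨U.zero_mem, trivial⟩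
    have hs_eq : s = (-t.1, q) := by
      obtain ⟨h₁, h₂⟩ := Prod.ext_iff.mp hst
      exact Prod.ext (eq_neg_of_add_eq_zero_left h₁) (by simpa [ht₂] using h₂)
    exact ⟨t.1, fun u hu => by simpa using ht (u, 0) ⟨hu, trivial⟩, hs_eq ▸ hs⟩

theorem relImage_relDual (hB : B.Nondegenerate) (hBs : B.IsSymm)
    (S : Submodule K (V × V)) (U : Submodule K V) :
    (S.relDual B).relImage (B.orthogonal U) = B.orthogonal (S.relInv.relImage U) := by
  rw [← relInv_relDual_relInv, relImage_relInv_relDual hB hBs]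

theorem iterate_relImage_relInv_relDual (hB : B.Nondegenerate) (hBs : B.IsSymm)
    (S : Submodule K (V × V)) (U : Submodule K V) (q : ℕ) :
    (S.relDual B).relInv.relImage^[q] (B.orthogonal U) = B.orthogonal (S.relImage^[q] U) :=
  (Function.Semiconj.iterate_right
    (f := B.orthogonal) (fun U => (relImage_relInv_relDual hB hBs S U).symm) q U).symm

theorem iterate_relImage_relDual (hB : B.Nondegenerate) (hBs : B.IsSymm)
    (S : Submodule K (V × V)) (U : Submodule K V) (q : ℕ) :
    (S.relDual B).relImage^[q] (B.orthogonal U) = B.orthogonal (S.relInv.relImage^[q] U) :=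
  (Function.Semiconj.iterate_right
    (f := B.orthogonal) (fun U => (relImage_relDual hB hBs S U).symm) q U).symm

end Dual

end Submodule

section Trajectories

variable {n : ℕ}

theorem imageSV_mono (H : SVMap n) : Monotone (imageSV H) :=
  fun _ _ hAB _ ⟨x, hx, hy⟩ => ⟨x, hAB hx, hy⟩

theorem mem_iterate_imageSV {H : SVMap n} {A : Set (Fin n → ℝ)} {q : ℕ} {ξ : Fin n → ℝ} :
    ξ ∈ (imageSV H)^[q] A ↔
      ∃ x : ℕ → Fin n → ℝ, x 0 ∈ A ∧ x q = ξ ∧ ∀ k < q, x (k + 1) ∈ H (x k) := by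
  induction q generalizing ξ with
  | zero => exact ⟨fun h => ⟨fun _ => ξ, h, rfl, by simp⟩, by rintro ⟨x, h0, rfl, -⟩; exact h0⟩
  | succ q ih =>
    rw [Function.iterate_succ_apply']
    constructor
    · rintro ⟨η, hη, hξ⟩
      obtain ⟨x, h0, rfl, hx⟩ := ih.mp hη
      refine ⟨Function.update x (q + 1) ξ, by simpa using h0, by simp, fun k hk => ?_⟩
      rcases Nat.lt_succ_iff_lt_or_eq.mp hk with hk | rfl
      · simpa [Function.update_of_ne (show k + 1 ≠ q + 1 by omega),
          Function.update_of_ne (show k ≠ q + 1 by omega)] using hx k hk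
      · simpa using hξ
    · rintro ⟨x, h0, rfl, hx⟩
      exact ⟨x q, ih.mpr ⟨x, h0, rfl, fun k hk => hx k (by omega)⟩, hx q q.lt_succ_self⟩

theorem reachSet_eq_iUnion_iterate (H : SVMap n) :
    reachSet H = ⋃ q, (imageSV H)^[q] {0} := by
  ext ξ
  simp only [reachSet, mem_ofPred_eq, mem_iUnion, mem_iterate_imageSV, mem_singleton_iff]

theorem feasSet_subset_imageSV_invSV (H : SVMap n) :
    feasSet H ⊆ imageSV (invSV H) (feasSet H) := by
  rintro _ ⟨x, rfl, hx⟩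
  exact ⟨x 1, ⟨fun k => x (k + 1), rfl, fun k => hx (k + 1)⟩, hx 0⟩

theorem subset_feasSet_of_subset_imageSV_invSV {H : SVMap n} {A : Set (Fin n → ℝ)}
    (hA : A ⊆ imageSV (invSV H) A) : A ⊆ feasSet H := by
  intro ξ hξ
  have hA' : ∀ y ∈ A, ∃ x ∈ A, x ∈ H y := hA
  choose! next hnextA hnext using hA'
  have hmem : ∀ k, next^[k] ξ ∈ A := fun k => (Set.MapsTo.iterate hnextA k) hξ
  exact ⟨fun k => next^[k] ξ, rfl, fun k => by
    simpa only [Function.iterate_succ_apply'] using hnext _ (hmem k)⟩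

theorem feasSet_subset_iterate (H : SVMap n) (q : ℕ) :
    feasSet H ⊆ (imageSV (invSV H))^[q] univ := by
  induction q with
  | zero => exact subset_univ _
  | succ q ih =>
    rw [Function.iterate_succ_apply']
    exact (feasSet_subset_imageSV_invSV H).trans (imageSV_mono _ ih)

theorem iterate_eq_feasSet_of_stable {H : SVMap n} {N : ℕ}
    (hN : (imageSV (invSV H))^[N + 1] univ = (imageSV (invSV H))^[N] univ) :
    (imageSV (invSV H))^[N] univ = feasSet H := by
  refine subset_antisymm (subset_feasSet_of_subset_imageSV_invSV ?_) (feasSet_subset_iterate H N)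
  rw [← Function.iterate_succ_apply' (imageSV (invSV H)), hN]

theorem feasSet_eq_iInter_iterate {H : SVMap n}
    (h : ∃ N, (imageSV (invSV H))^[N] univ = feasSet H) :
    feasSet H = ⋂ q, (imageSV (invSV H))^[q] univ := by
  obtain ⟨N, hN⟩ := h
  exact subset_antisymm (subset_iInter (feasSet_subset_iterate H)) (hN ▸ iInter_subset _ N)

end Trajectories

section Orthogonal

variable {n : ℕ}

theorem orthVec_anti {A B : Set (Fin n → ℝ)} (h : A ⊆ B) : orthVec B ⊆ orthVec A :=
  fun _ hx y hy => hx y (h hy)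

theorem orthVec_iUnion {ι : Type*} (A : ι → Set (Fin n → ℝ)) :
    orthVec (⋃ i, A i) = ⋂ i, orthVec (A i) := by
  ext x
  simp only [orthVec, mem_iUnion, mem_iInter, mem_ofPred_eq]
  exact ⟨fun h i y hy => h y ⟨i, hy⟩, fun h y ⟨i, hy⟩ => h i y hy⟩

theorem iUnion_orthVec_eq_of_forall_subset {A : Set (Fin n → ℝ)} {D : ℕ → Set (Fin n → ℝ)}
    {N : ℕ} (hA : ∀ q, A ⊆ D q) (hN : D N = A) : ⋃ q, orthVec (D q) = orthVec A :=
  subset_antisymm (iUnion_subset fun q => orthVec_anti (hA q))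
    (hN ▸ subset_iUnion (fun q => orthVec (D q)) N)

abbrev dotForm (n : ℕ) : BilinForm ℝ (Fin n → ℝ) := dotProductBilin ℝ ℝ

theorem dotForm_isSymm : (dotForm n).IsSymm :=
  ⟨fun x y => dotProduct_comm x y⟩

theorem dotForm_nondegenerate : (dotForm n).Nondegenerate :=
  ⟨fun _ => dotProduct_eq_zero_iff.mp,
    fun y hy => dotProduct_eq_zero_iff.mp fun x => (dotProduct_comm y x).trans (hy x)⟩

theorem orthVec_coe (U : Submodule ℝ (Fin n → ℝ)) :
    orthVec (U : Set (Fin n → ℝ)) = (dotForm n).orthogonal U := by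
  ext x
  exact forall₂_congr fun y _ => by rw [dotProduct_comm]; rfl

end Orthogonal

section LinearProcess

variable {n : ℕ} (S : Submodule ℝ ((Fin n → ℝ) × (Fin n → ℝ)))

theorem imageSV_ofGraph (U : Submodule ℝ (Fin n → ℝ)) :
    imageSV (ofGraph (n := n) S) U = (S.relImage U : Set (Fin n → ℝ)) := by
  ext y
  simp [imageSV, ofGraph]

theorem iterate_imageSV_ofGraph (U : Submodule ℝ (Fin n → ℝ)) (q : ℕ) :
    (imageSV (ofGraph (n := n) S))^[q] U = (S.relImage^[q] U : Set (Fin n → ℝ)) :=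
  (Function.Semiconj.iterate_right (f := ((↑) : Submodule ℝ (Fin n → ℝ) → Set (Fin n → ℝ)))
    (fun U => (imageSV_ofGraph S U).symm) q U).symm

theorem invSV_ofGraph : invSV (ofGraph (n := n) S) = ofGraph (n := n) S.relInv :=
  rfl

theorem perpProcess_ofGraph :
    perpProcess (ofGraph (n := n) S) = ofGraph (n := n) (S.relDual (dotForm n)) := by
  have hflip : Function.LeftInverse (fun p => (-p.2, p.1)) (flipMap (n := n)) :=
    fun p => by simp [flipMap]
  have hflip' : Function.RightInverse (fun p => (-p.2, p.1)) (flipMap (n := n)) :=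
    fun p => by simp [flipMap]
  ext x y
  simp only [perpProcess, ofGraph, Set.image_eq_preimage_of_inverse hflip hflip']
  -- `pairDot` is definitionally `(dotForm n).prodSelf`
  rfl

theorem exists_iterate_eq_feasSet_ofGraph :
    ∃ N, (imageSV (invSV (ofGraph (n := n) S)))^[N] univ = feasSet (ofGraph (n := n) S) := by
  obtain ⟨N, hN⟩ := S.relInv.exists_iterate_relImage_top_stable
  refine ⟨N, iterate_eq_feasSet_of_stable ?_⟩
  rw [invSV_ofGraph, ← Submodule.top_coe (R := ℝ), iterate_imageSV_ofGraph,
    iterate_imageSV_ofGraph, hN]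

theorem iterate_imageSV_invSV_ofGraph_relDual (q : ℕ) :
    (imageSV (invSV (ofGraph (n := n) (S.relDual (dotForm n)))))^[q] univ =
      orthVec ((imageSV (ofGraph (n := n) S))^[q] {0}) := by
  rw [invSV_ofGraph, ← Submodule.top_coe (R := ℝ), ← Submodule.bot_coe (R := ℝ),
    iterate_imageSV_ofGraph, iterate_imageSV_ofGraph, orthVec_coe,
    ← LinearMap.BilinForm.orthogonal_bot (B := dotForm n),
    Submodule.iterate_relImage_relInv_relDual dotForm_nondegenerate dotForm_isSymm]

theorem iterate_imageSV_ofGraph_relDual (q : ℕ) :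
    (imageSV (ofGraph (n := n) (S.relDual (dotForm n))))^[q] {0} =
      orthVec ((imageSV (invSV (ofGraph (n := n) S)))^[q] univ) := by
  rw [invSV_ofGraph, ← Submodule.top_coe (R := ℝ), ← Submodule.bot_coe (R := ℝ),
    iterate_imageSV_ofGraph, iterate_imageSV_ofGraph, orthVec_coe,
    ← LinearMap.BilinForm.orthogonal_top_eq_bot dotForm_nondegenerate,
    Submodule.iterate_relImage_relDual dotForm_nondegenerate dotForm_isSymm]

end LinearProcess

/-- For a linear process `L` and its dual `L^⊥`: `F(L^⊥) = R(L)^⊥` and `R(L^⊥) = F(L)^⊥`. -/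
theorem stmt17 {n : ℕ} (L : SVMap n) (hL : IsLinearProcess L) :
    feasSet (perpProcess L) = orthVec (reachSet L) ∧
    reachSet (perpProcess L) = orthVec (feasSet L) := by
  obtain ⟨S, hS⟩ := hL
  obtain rfl : L = ofGraph (n := n) S := by rw [← hS]; rfl
  rw [perpProcess_ofGraph]
  constructor
  · rw [feasSet_eq_iInter_iterate (exists_iterate_eq_feasSet_ofGraph _),
      reachSet_eq_iUnion_iterate, orthVec_iUnion]
    exact iInter_congr (iterate_imageSV_invSV_ofGraph_relDual S)
  · obtain ⟨N, hN⟩ := exists_iterate_eq_feasSet_ofGraph S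
    rw [reachSet_eq_iUnion_iterate]
    simp only [iterate_imageSV_ofGraph_relDual]
    exact iUnion_orthVec_eq_of_forall_subset (feasSet_subset_iterate _) hN
end

section
/- Let H : ℝ^n ⇒ ℝ^n be a closed convex process with negative and positive dual processes H^- and H^+, and let L_-(·) and L_+(·) denote the minimal and maximal linear processes associated with a convex process. Then L_-(H^-) = L_-(H^+) = (L_+(H))^⊥ and L_+(H^-) = L_+(H^+) = (L_-(H))^⊥, where for a linear process L, L^⊥ is the linear process with graph L^⊥ = {(b, −a) : (a,b) ∈ (graph L)^⊥}. -/
open Matrix Set Pointwise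

/-! The rotation `(a, b) ↦ (b, -a)` maps the polar cone `P` of `C = graph H` onto `graph H⁺`, and
`graph H⁻ = -graph H⁺`. Hence `L_±(H⁻) = L_±(H⁺)`, with graphs the rotated `lin P` and `Lin P`.
For any cone containing `0`, `lin P = (Lin C)^⊥`; the bipolar theorem, applied to `C` and to the
closed subspace `P - P`, gives `Lin P = (lin C)^⊥`. -/

lemma IsConvexCone.zero_mem {V : Type*} [AddCommGroup V] [Module ℝ V] {C : Set V}
    (hC : IsConvexCone C) : (0 : V) ∈ C := by
  obtain ⟨⟨x, hx⟩, -, hsmul⟩ := hC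
  simpa using hsmul 0 le_rfl x hx

lemma IsConvexCone.add_mem {V : Type*} [AddCommGroup V] [Module ℝ V] {C : Set V}
    (hC : IsConvexCone C) {a b : V} (ha : a ∈ C) (hb : b ∈ C) : a + b ∈ C := by
  have hmid : (2⁻¹ : ℝ) • a + (2⁻¹ : ℝ) • b ∈ C :=
    hC.2.1 ha hb (by norm_num) (by norm_num) (by norm_num)
  have := hC.2.2 2 (by norm_num) _ hmid
  rwa [smul_add, smul_inv_smul₀ two_ne_zero, smul_inv_smul₀ two_ne_zero] at this

def IsConvexCone.toProperCone {V : Type*} [AddCommGroup V] [Module ℝ V] [TopologicalSpace V]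
    {C : Set V} (hC : IsConvexCone C) (hcl : IsClosed C) : ProperCone ℝ V where
  carrier := C
  add_mem' := hC.add_mem
  zero_mem' := hC.zero_mem
  smul_mem' c _ hx := hC.2.2 c c.2 _ hx
  isClosed' := hcl

lemma Submodule.isConvexCone {V : Type*} [AddCommGroup V] [Module ℝ V] (S : Submodule ℝ V) :
    IsConvexCone (S : Set V) :=
  ⟨⟨0, S.zero_mem⟩, S.convex, fun c _ _ hx => S.smul_mem c hx⟩

def PointedCone.linSpan {V : Type*} [AddCommGroup V] [Module ℝ V] (K : PointedCone ℝ V) :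
    Submodule ℝ V where
  carrier := K - K
  add_mem' := by
    rintro _ _ ⟨a, ha, b, hb, rfl⟩ ⟨c, hc, d, hd, rfl⟩
    exact ⟨a + c, K.add_mem ha hc, b + d, K.add_mem hb hd, add_sub_add_comm ..⟩
  zero_mem' := ⟨0, K.zero_mem, 0, K.zero_mem, sub_zero 0⟩
  smul_mem' r := by
    rintro _ ⟨a, ha, b, hb, rfl⟩
    rcases le_total 0 r with hr | hr
    · exact ⟨r • a, K.smul_mem hr ha, r • b, K.smul_mem hr hb, (smul_sub r a b).symm⟩
    · have hr' : 0 ≤ -r := neg_nonneg.2 hr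
      refine ⟨(-r) • b, K.smul_mem hr' hb, (-r) • a, K.smul_mem hr' ha, ?_⟩
      simp only [neg_smul, neg_sub_neg, smul_sub]

lemma AddEquiv.image_neg_inter_self {V W : Type*} [AddCommGroup V] [AddCommGroup W]
    (e : V ≃+ W) (A : Set V) : e '' (-A ∩ A) = -(e '' A) ∩ e '' A := by
  rw [image_inter e.injective, image_neg]

section Pairing

variable {n : ℕ}

local notation "E" => (Fin n → ℝ) × (Fin n → ℝ)

def pairDotBilin : E →ₗ[ℝ] E →ₗ[ℝ] ℝ :=
  (dotProductBilin ℝ ℝ).compl₁₂ (.fst ℝ _ _) (.fst ℝ _ _) +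
    (dotProductBilin ℝ ℝ).compl₁₂ (.snd ℝ _ _) (.snd ℝ _ _)

lemma pairDotBilin_apply (p q : E) : pairDotBilin p q = pairDot p q := rfl

lemma pairDot_comm (p q : E) : pairDot p q = pairDot q p := by
  simp only [pairDot, dotProduct_comm]

lemma pairDot_neg_right (p q : E) : pairDot p (-q) = -pairDot p q := by
  simp only [← pairDotBilin_apply, map_neg]

lemma pairDot_neg_left (p q : E) : pairDot (-p) q = -pairDot p q := by
  simp only [← pairDotBilin_apply, map_neg, LinearMap.neg_apply]

lemma pairDot_sub_left (p q r : E) : pairDot (p - q) r = pairDot p r - pairDot q r := by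
  simp only [← pairDotBilin_apply, map_sub, LinearMap.sub_apply]

lemma exists_pairDot_eq (f : E →ₗ[ℝ] ℝ) : ∃ v : E, ∀ p, f p = pairDot p v := by
  let e := dotProductEquiv ℝ (Fin n)
  refine ⟨(e.symm (f ∘ₗ .inl ℝ _ _), e.symm (f ∘ₗ .inr ℝ _ _)), fun ⟨x, y⟩ => ?_⟩
  have hx : x ⬝ᵥ e.symm (f ∘ₗ .inl ℝ _ _) = f (x, 0) := by
    rw [dotProduct_comm, ← dotProductEquiv_apply_apply, LinearEquiv.apply_symm_apply]; rfl
  have hy : y ⬝ᵥ e.symm (f ∘ₗ .inr ℝ _ _) = f (0, y) := by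
    rw [dotProduct_comm, ← dotProductEquiv_apply_apply, LinearEquiv.apply_symm_apply]; rfl
  rw [pairDot, hx, hy, ← map_add, Prod.mk_add_mk, add_zero, zero_add]

lemma polarPos_polarPos {C : Set E} (hC : IsConvexCone C) (hcl : IsClosed C) :
    polarPos (polarPos C) = C := by
  refine Subset.antisymm (fun x hx => ?_) fun x hx η hη => pairDot_comm η x ▸ hη x hx
  by_contra hxC
  obtain ⟨f, hfC, hfx⟩ := (hC.toProperCone hcl).hyperplane_separation_point hxC
  obtain ⟨v, hv⟩ := exists_pairDot_eq f.toLinearMap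
  have hvC : v ∈ polarPos C := fun d hd => hv d ▸ hfC d hd
  have := hx v hvC
  rw [← ContinuousLinearMap.coe_coe, hv, pairDot_comm] at hfx
  linarith

lemma neg_polarPos_inter_polarPos (C : Set E) : -polarPos C ∩ polarPos C = orthPair C := by
  ext η
  simp only [mem_inter_iff, mem_neg, polarPos, orthPair, mem_ofPred_eq, pairDot_neg_right,
    neg_nonneg, ← forall₂_and, le_antisymm_iff]

lemma orthPair_sub_self {C : Set E} (h0 : (0 : E) ∈ C) : orthPair (C - C) = orthPair C := by
  refine Subset.antisymm (fun η hη d hd => ?_) ?_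
  · simpa using hη (d - 0) (sub_mem_sub hd h0)
  · rintro η hη _ ⟨a, ha, b, hb, rfl⟩
    rw [pairDot_sub_left, hη a ha, hη b hb, sub_zero]

lemma polarPos_sub_self {C : Set E} (h0 : (0 : E) ∈ C) : polarPos (C - C) = orthPair C := by
  refine Subset.antisymm (fun η hη d hd => le_antisymm ?_ ?_) fun η hη d hd => ?_
  · simpa [pairDot_neg_left] using hη (0 - d) (sub_mem_sub h0 hd)
  · simpa using hη (d - 0) (sub_mem_sub hd h0)
  · rw [← orthPair_sub_self h0] at hη
    exact (hη d hd).ge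

lemma polarPos_eq_orthPair {S : Set E} (hS : ∀ d ∈ S, -d ∈ S) : polarPos S = orthPair S := by
  refine Subset.antisymm (fun η hη d hd => le_antisymm ?_ (hη d hd)) fun η hη d hd => (hη d hd).ge
  simpa [pairDot_comm, pairDot_neg_right] using hη (-d) (hS d hd)

lemma polarPos_sub_polarPos {C : Set E} (hC : IsConvexCone C) (hcl : IsClosed C) :
    polarPos C - polarPos C = orthPair (-C ∩ C) := by
  let K := (PointedCone.dual pairDotBilin C).linSpan
  have hK : (K : Set E) = polarPos C - polarPos C := rfl
  have h0 : (0 : E) ∈ polarPos C := (PointedCone.dual pairDotBilin C).zero_mem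
  calc polarPos C - polarPos C = polarPos (polarPos (K : Set E)) :=
        (polarPos_polarPos K.isConvexCone K.closed_of_finiteDimensional).symm
    _ = polarPos (-C ∩ C) := by
        rw [hK, polarPos_sub_self h0, ← neg_polarPos_inter_polarPos, polarPos_polarPos hC hcl]
    _ = orthPair (-C ∩ C) := polarPos_eq_orthPair fun d hd => ⟨by simpa using hd.2, hd.1⟩

end Pairing

section Duals

variable {n : ℕ}

def flipAddEquiv : ((Fin n → ℝ) × (Fin n → ℝ)) ≃+ ((Fin n → ℝ) × (Fin n → ℝ)) where
  toFun := flipMap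
  invFun p := (-p.2, p.1)
  left_inv p := by simp [flipMap]
  right_inv p := by simp [flipMap]
  map_add' p q := by simp [flipMap, add_comm]

lemma graphOf_ofGraph (S : Set ((Fin n → ℝ) × (Fin n → ℝ))) : graphOf (ofGraph S) = S := rfl

lemma coe_flipAddEquiv : ⇑(flipAddEquiv (n := n)) = flipMap := rfl

lemma graphOf_dualPos (H : SVMap n) : graphOf (dualPos H) = flipMap '' polarPos (graphOf H) := by
  ext ⟨q, p⟩
  constructor
  · intro h
    refine ⟨(-p, q), fun ⟨x, y⟩ hxy => ?_, by simp [flipMap]⟩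
    have := h x y hxy
    simp only [pairDot, dotProduct_neg, dotProduct_comm x p, dotProduct_comm y q]
    linarith
  · rintro ⟨⟨a, b⟩, hab, hflip⟩ x y hxy
    obtain ⟨rfl, rfl⟩ : b = q ∧ -a = p := by simpa [flipMap] using hflip
    have := hab (x, y) hxy
    simp only [pairDot, dotProduct_comm x a, dotProduct_comm y b] at this
    simp only [neg_dotProduct]
    linarith

lemma graphOf_dualNeg (H : SVMap n) : graphOf (dualNeg H) = -graphOf (dualPos H) := by
  ext ⟨q, p⟩
  simp only [graphOf, dualNeg, dualPos, mem_neg, mem_ofPred_eq, Prod.fst_neg, Prod.snd_neg,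
    neg_dotProduct, neg_le_neg_iff]

lemma Lminus_dualNeg (H : SVMap n) : Lminus (dualNeg H) = Lminus (dualPos H) := by
  rw [Lminus, Lminus, graphOf_dualNeg, neg_neg, inter_comm]

lemma Lplus_dualNeg (H : SVMap n) : Lplus (dualNeg H) = Lplus (dualPos H) := by
  rw [Lplus, Lplus, graphOf_dualNeg, neg_sub_neg]

lemma Lminus_dualPos {H : SVMap n} (h0 : 0 ∈ graphOf H) :
    Lminus (dualPos H) = perpProcess (Lplus H) := by
  rw [Lminus, perpProcess, Lplus, graphOf_ofGraph, graphOf_dualPos, ← coe_flipAddEquiv,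
    ← AddEquiv.image_neg_inter_self, neg_polarPos_inter_polarPos, orthPair_sub_self h0]

lemma Lplus_dualPos {H : SVMap n} (hH : IsConvexProcess H) (hcl : IsClosed (graphOf H)) :
    Lplus (dualPos H) = perpProcess (Lminus H) := by
  rw [Lplus, perpProcess, Lminus, graphOf_ofGraph, graphOf_dualPos, ← coe_flipAddEquiv,
    ← image_sub, polarPos_sub_polarPos hH hcl]

end Duals

/-- For a closed convex process `H`:
`L_-(H^-) = L_-(H^+) = (L_+(H))^⊥` and `L_+(H^-) = L_+(H^+) = (L_-(H))^⊥`. -/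
theorem stmt18 {n : ℕ} (H : SVMap n) (hH : IsConvexProcess H)
    (hcl : IsClosed (graphOf H)) :
    Lminus (dualNeg H) = Lminus (dualPos H) ∧
    Lminus (dualNeg H) = perpProcess (Lplus H) ∧
    Lplus (dualNeg H) = Lplus (dualPos H) ∧
    Lplus (dualNeg H) = perpProcess (Lminus H) := by
  have hLminus := Lminus_dualPos (IsConvexCone.zero_mem hH)
  have hLplus := Lplus_dualPos hH hcl
  exact ⟨Lminus_dualNeg H, (Lminus_dualNeg H).trans hLminus, Lplus_dualNeg H,
    (Lplus_dualNeg H).trans hLplus⟩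
end
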